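/- arXiv:2203.09429 — 2 statements merged into one kernel-verified Lean document; each statement's English description precedes it below -/
import Mathlib

section
/- Let d ≥ 1 and n ≥ 2. There exist n orthonormal bases {b^y_j}_{j=1}^{d} (y = 1,…,n) of ℂ^d with (2/d) · ∑_{1 ≤ y < z ≤ n} ∑_{j,k=1}^{d} √(1 − |⟨b^y_j, b^z_k⟩|²) = n(n−1)·√(d(d−1)) if and only if there exist n pairwise mutually unbiased bases in dimension d. -/
open Finset
open scoped ComplexInnerProductSpace

/-!
For unit vectors `c j` and an orthonormal basis `e`, Parseval gives
`∑ j, ∑ k, ‖⟪c j, e k⟫‖ ^ 2 = #c`, so the `#c * d` numbers `1 - ‖⟪c j, e k⟫‖ ^ 2` are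
nonnegative with mean `1 - 1 / d`. By Jensen's inequality for the strictly concave square root,
the double sum of `√(1 - ‖⟪c j, e k⟫‖ ^ 2)` for a pair of bases is at most `d ^ 2 * √(1 - 1 / d)`,
with equality exactly when the pair is mutually unbiased. The bound `n (n - 1) √(d (d - 1))` is
the sum of these maxima over the `n.choose 2` pairs, so it is attained iff every pair is unbiased.
-/

theorem Real.sum_sqrt_le_card_mul_sqrt {ι : Type*} {s : Finset ι} {t : ι → ℝ} {a : ℝ}
    (ht : ∀ i ∈ s, 0 ≤ t i) (hsum : ∑ i ∈ s, t i = #s * a) :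
    ∑ i ∈ s, √(t i) ≤ #s * √a := by
  rcases s.eq_empty_or_nonempty with rfl | hs
  · simp
  have hcard : (0 : ℝ) < #s := by exact_mod_cast hs.card_pos
  have hjensen := Real.strictConcaveOn_sqrt.concaveOn.le_map_sum (t := s)
    (w := fun _ => (#s : ℝ)⁻¹) (p := t) (fun _ _ => by positivity) (by simp [hcard.ne']) ht
  simp only [smul_eq_mul, ← mul_sum, hsum] at hjensen
  rwa [inv_mul_cancel_left₀ hcard.ne', inv_mul_le_iff₀ hcard] at hjensen

theorem Real.sum_sqrt_eq_card_mul_sqrt_iff {ι : Type*} {s : Finset ι} {t : ι → ℝ} {a : ℝ}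
    (ht : ∀ i ∈ s, 0 ≤ t i) (hsum : ∑ i ∈ s, t i = #s * a) :
    ∑ i ∈ s, √(t i) = #s * √a ↔ ∀ i ∈ s, t i = a := by
  rcases s.eq_empty_or_nonempty with rfl | hs
  · simp
  have hcard : (0 : ℝ) < #s := by exact_mod_cast hs.card_pos
  have hjensen := Real.strictConcaveOn_sqrt.map_sum_eq_iff (t := s)
    (w := fun _ => (#s : ℝ)⁻¹) (p := t) (fun _ _ => by positivity) (by simp [hcard.ne']) ht
  simp only [smul_eq_mul, ← mul_sum, hsum, inv_mul_cancel_left₀ hcard.ne'] at hjensen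
  rw [← hjensen, eq_inv_mul_iff_mul_eq₀ hcard.ne', eq_comm]

section MutuallyUnbiased

open scoped InnerProductSpace

variable {𝕜 E ι κ : Type*} [RCLike 𝕜] [NormedAddCommGroup E] [InnerProductSpace 𝕜 E]
  [Fintype ι] [Fintype κ]

theorem one_sub_sq_norm_inner_nonneg {x y : E} (hx : ‖x‖ = 1) (hy : ‖y‖ = 1) :
    0 ≤ 1 - ‖⟪x, y⟫_𝕜‖ ^ 2 := by
  have := norm_inner_le_norm (𝕜 := 𝕜) x y
  rw [hx, hy, one_mul] at this
  nlinarith [norm_nonneg ⟪x, y⟫_𝕜]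

theorem sum_prod_one_sub_sq_norm_inner {c : κ → E} (hc : ∀ j, ‖c j‖ = 1)
    (e : OrthonormalBasis ι 𝕜 E) :
    ∑ p : κ × ι, (1 - ‖⟪c p.1, e p.2⟫_𝕜‖ ^ 2)
      = #(univ : Finset (κ × ι)) * (1 - 1 / (Fintype.card ι : ℝ)) := by
  rcases isEmpty_or_nonempty ι with hι | hι
  · simp
  simp only [Fintype.sum_prod_type, sum_sub_distrib, e.sum_sq_norm_inner_left, hc, card_univ,
    Fintype.card_prod, sum_const, nsmul_eq_mul]
  field_simp
  push_cast
  ring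

theorem sum_sqrt_one_sub_sq_norm_inner_le {c : κ → E} (hc : ∀ j, ‖c j‖ = 1)
    (e : OrthonormalBasis ι 𝕜 E) :
    ∑ j, ∑ k, √(1 - ‖⟪c j, e k⟫_𝕜‖ ^ 2)
      ≤ Fintype.card κ * Fintype.card ι * √(1 - 1 / (Fintype.card ι : ℝ)) := by
  rw [← Fintype.sum_prod_type']
  convert Real.sum_sqrt_le_card_mul_sqrt (s := univ)
    (fun (p : κ × ι) _ => one_sub_sq_norm_inner_nonneg (hc p.1) (e.orthonormal.1 p.2))
    (sum_prod_one_sub_sq_norm_inner hc e) using 2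
  simp

theorem sum_sqrt_one_sub_sq_norm_inner_eq_iff {c : κ → E} (hc : ∀ j, ‖c j‖ = 1)
    (e : OrthonormalBasis ι 𝕜 E) :
    ∑ j, ∑ k, √(1 - ‖⟪c j, e k⟫_𝕜‖ ^ 2)
        = Fintype.card κ * Fintype.card ι * √(1 - 1 / (Fintype.card ι : ℝ)) ↔
      ∀ j k, ‖⟪c j, e k⟫_𝕜‖ ^ 2 = 1 / Fintype.card ι := by
  rw [← Fintype.sum_prod_type']
  convert Real.sum_sqrt_eq_card_mul_sqrt_iff (s := univ)
    (fun (p : κ × ι) _ => one_sub_sq_norm_inner_nonneg (hc p.1) (e.orthonormal.1 p.2))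
    (sum_prod_one_sub_sq_norm_inner hc e) using 2
  · simp
  · simp [Prod.forall]

variable (𝕜) in
/-- The paper's `W^{+B}_{d,n}`, with `d = card ι` and `n = card κ`. -/
noncomputable def mubMeasure [LinearOrder κ] (B : κ → OrthonormalBasis ι 𝕜 E) : ℝ :=
  (2 / Fintype.card ι) * ∑ p ∈ univ.filter (fun p : κ × κ => p.1 < p.2),
    ∑ j, ∑ k, √(1 - ‖⟪B p.1 j, B p.2 k⟫_𝕜‖ ^ 2)

theorem mubMeasure_eq_iff [LinearOrder κ] [Nonempty ι] (B : κ → OrthonormalBasis ι 𝕜 E) :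
    mubMeasure 𝕜 B
      = Fintype.card κ * (Fintype.card κ - 1) * √(Fintype.card ι * (Fintype.card ι - 1)) ↔
      ∀ y z, y ≠ z → ∀ j k, ‖⟪B y j, B z k⟫_𝕜‖ ^ 2 = 1 / Fintype.card ι := by
  have hunbiased y z :=
    sum_sqrt_one_sub_sq_norm_inner_eq_iff (B y).orthonormal.1 (B z)
  set m : ℝ := (Fintype.card κ : ℝ)
  set d : ℝ := (Fintype.card ι : ℝ)
  have hd : 0 < d := by simp [d, Fintype.card_pos]
  have hpairs : (#(univ.filter (fun p : κ × κ => p.1 < p.2)) : ℝ) = m * (m - 1) / 2 := by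
    rw [← univ_product_univ, card_product_filter_lt, Nat.cast_choose_two, card_univ]
  have hbound : m * (m - 1) * √(d * (d - 1))
      = 2 / d * ∑ _p ∈ univ.filter (fun p : κ × κ => p.1 < p.2), d * d * √(1 - 1 / d) := by
    have hd' : d * (d - 1) = d ^ 2 * (1 - 1 / d) := by field_simp
    rw [sum_const, nsmul_eq_mul, hpairs, hd', Real.sqrt_mul (sq_nonneg d), Real.sqrt_sq hd.le]
    field_simp
  have : Std.Symm fun y z => ∀ j k, ‖⟪B y j, B z k⟫_𝕜‖ ^ 2 = 1 / d :=
    ⟨fun y z h j k => by rw [norm_inner_symm, h k j]⟩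
  rw [mubMeasure, hbound, mul_right_inj' (by positivity), sum_eq_sum_iff_of_le fun p _ =>
    sum_sqrt_one_sub_sq_norm_inner_le (B p.1).orthonormal.1 (B p.2)]
  simp only [mem_filter, mem_univ, true_and, Prod.forall, hunbiased]
  exact (pairwise_iff_lt (p := fun y z => ∀ j k, ‖⟪B y j, B z k⟫_𝕜‖ ^ 2 = 1 / d)).symm

end MutuallyUnbiased

theorem stmt_5_general (d n : ℕ) (hd : 1 ≤ d) :
    (∃ b : Fin n → Fin d → EuclideanSpace ℂ (Fin d),
      (∀ y, Orthonormal ℂ (b y)) ∧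
      (∀ y, Submodule.span ℂ (Set.range (b y)) = ⊤) ∧
      (2 / d) * ∑ p ∈ Finset.univ.filter (fun p : Fin n × Fin n => p.1 < p.2),
          ∑ j, ∑ k, Real.sqrt (1 - ‖⟪b p.1 j, b p.2 k⟫‖ ^ 2)
        = n * (n - 1) * Real.sqrt (d * (d - 1))) ↔
    (∃ b : Fin n → Fin d → EuclideanSpace ℂ (Fin d),
      (∀ y, Orthonormal ℂ (b y)) ∧
      (∀ y, Submodule.span ℂ (Set.range (b y)) = ⊤) ∧
      ∀ y z, y ≠ z → ∀ j k, ‖⟪b y j, b z k⟫‖ ^ 2 = 1 / d) := by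
  have : Nonempty (Fin d) := ⟨⟨0, hd⟩⟩
  refine exists_congr fun b => and_congr_right fun hon => and_congr_right fun hsp => ?_
  have key := mubMeasure_eq_iff fun y => OrthonormalBasis.mk (hon y) (hsp y).ge
  simpa only [mubMeasure, OrthonormalBasis.coe_mk, Fintype.card_fin] using key

theorem stmt_5 (d n : ℕ) (hd : 1 ≤ d) (hn : 2 ≤ n) :
    (∃ b : Fin n → Fin d → EuclideanSpace ℂ (Fin d),
      (∀ y, Orthonormal ℂ (b y)) ∧
      (∀ y, Submodule.span ℂ (Set.range (b y)) = ⊤) ∧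
      (2 / d) * ∑ p ∈ Finset.univ.filter (fun p : Fin n × Fin n => p.1 < p.2),
          ∑ j, ∑ k, Real.sqrt (1 - ‖⟪b p.1 j, b p.2 k⟫‖ ^ 2)
        = n * (n - 1) * Real.sqrt (d * (d - 1))) ↔
    (∃ b : Fin n → Fin d → EuclideanSpace ℂ (Fin d),
      (∀ y, Orthonormal ℂ (b y)) ∧
      (∀ y, Submodule.span ℂ (Set.range (b y)) = ⊤) ∧
      ∀ y z, y ≠ z → ∀ j k, ‖⟪b y j, b z k⟫‖ ^ 2 = 1 / d) :=
  stmt_5_general d n hd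
end

section
/- Let d ≥ 2 and let P and Q be rank-one orthogonal projections on ℂ^d with tr(PQ) < 1, and set λ = √(1 − tr(PQ)). Then there exist rank-one orthogonal projections A₊ and A₋ on ℂ^d with A₊A₋ = 0 such that P − Q = λ·(A₊ − A₋). -/
/-!
An idempotent of trace one has rank one, since the trace of an idempotent is its rank; so the
corner `P * M * P` of any matrix is a multiple of `P`, and taking traces identifies the multiple: `P * M * P = tr (M * P) • P`. For two rank-one projections
this gives `P * Q * P = t • P` and `Q * P * Q = t • Q` with `t = tr (P * Q)`, whence `D = P - Q`
satisfies `D ^ 3 = λ ^ 2 • D`, `tr D = 0` and `tr D ^ 2 = 2 λ ^ 2`. The spectral projections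
`(D ^ 2 ± λ • D) / (2 λ ^ 2)` of `D` onto the eigenvalues `±λ` are then self-adjoint,
mutually orthogonal idempotents of trace one, and `D = λ • (A₊ - A₋)`.
-/

open Module LinearMap in
theorem LinearMap.exists_mul_mul_eq_smul_of_finrank_range_eq_one {K V : Type*} [Field K]
    [AddCommGroup V] [Module K V] {e : Module.End K V} (he : finrank K (range e) = 1)
    (f : Module.End K V) : ∃ a : K, e * f * e = a • e := by
  obtain ⟨v, -, hv⟩ := finrank_eq_one_iff'.mp he
  obtain ⟨a, ha⟩ := hv ⟨e (f v), mem_range_self e _⟩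
  refine ⟨a, LinearMap.ext fun x => ?_⟩
  obtain ⟨b, hb⟩ := hv ⟨e x, mem_range_self e x⟩
  have ha' : a • (v : V) = e (f v) := congrArg Subtype.val ha
  have hb' : b • (v : V) = e x := congrArg Subtype.val hb
  simp only [Module.End.mul_apply, LinearMap.smul_apply, ← hb', map_smul, ← ha', smul_comm a b]

open Module LinearMap in
theorem Matrix.mul_mul_eq_trace_smul_of_isIdempotentElem {K n : Type*} [Field K] [CharZero K]
    [Fintype n] [DecidableEq n] {P : Matrix n n K} (hP : IsIdempotentElem P) (htr : P.trace = 1)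
    (M : Matrix n n K) : P * M * P = (M * P).trace • P := by
  have hrange : finrank K (range (toLinAlgEquiv' P)) = 1 := by
    have h := (hP.map toLinAlgEquiv').isProj_range.trace
    change LinearMap.trace K _ (toLin' P) = _ at h
    rw [trace_toLin'_eq, htr] at h
    exact_mod_cast h.symm
  obtain ⟨a, ha⟩ := exists_mul_mul_eq_smul_of_finrank_range_eq_one hrange (toLinAlgEquiv' M)
  have hcorner : P * M * P = a • P :=
    toLinAlgEquiv'.injective (by simpa only [map_mul, map_smul] using ha)
  have htrace : (M * P).trace = a := by
    calc (M * P).trace = (P * M * P).trace := by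
          rw [trace_mul_comm (P * M), ← mul_assoc, hP.eq, trace_mul_comm]
      _ = a := by rw [hcorner, trace_smul, htr, smul_eq_mul, mul_one]
  rw [hcorner, htrace]

theorem IsIdempotentElem.sub_sq {R : Type*} [Ring R] {p q : R} (hp : IsIdempotentElem p)
    (hq : IsIdempotentElem q) : (p - q) ^ 2 = p + q - p * q - q * p := by
  rw [sq, sub_mul, mul_sub, mul_sub, hp.eq, hq.eq]
  abel

theorem IsIdempotentElem.sub_pow_three {K A : Type*} [CommRing K] [Ring A] [Algebra K A]
    {p q : A} {t : K} (hp : IsIdempotentElem p) (hq : IsIdempotentElem q)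
    (hpqp : p * q * p = t • p) (hqpq : q * p * q = t • q) :
    (p - q) ^ 3 = (1 - t) • (p - q) := by
  calc (p - q) ^ 3 = p - q - p * q * p + q * p * q := by
        rw [pow_succ, hp.sub_sq hq]
        simp only [sub_mul, add_mul, mul_sub, mul_assoc, hp.eq, hq.eq]
        rw [← mul_assoc p q p, ← mul_assoc q p q]
        abel
    _ = (1 - t) • (p - q) := by rw [hpqp, hqpq]; module

section Eigenprojection

variable {K A : Type*} [Field K] [Ring A] [Algebra K A]

theorem sq_add_smul_mul_sq_add_smul (a b : K) (D : A) :
    (D ^ 2 + a • D) * (D ^ 2 + b • D) = D ^ 4 + (a + b) • D ^ 3 + (a * b) • D ^ 2 := by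
  simp only [pow_succ, pow_zero, one_mul, add_mul, mul_add, smul_mul_assoc, mul_smul_comm,
    mul_assoc]
  module

/-- `(x ^ 2 + c x) / (2 c ^ 2)` is the Lagrange polynomial taking the value `1` at `c` and `0` at
the other roots `0, -c` of `x ^ 3 - c ^ 2 x`. -/
def eigenprojection (c : K) (D : A) : A := (2 * c ^ 2)⁻¹ • (D ^ 2 + c • D)

variable {c : K} {D : A}

theorem eigenprojection_mul_eigenprojection (hD : D ^ 3 = c ^ 2 • D) (a b : K) :
    eigenprojection a D * eigenprojection b D
      = ((2 * a ^ 2)⁻¹ * (2 * b ^ 2)⁻¹) • ((c ^ 2 + a * b) • D ^ 2 + ((a + b) * c ^ 2) • D) := by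
  have hD4 : D ^ 4 = c ^ 2 • D ^ 2 := by rw [pow_succ, hD, smul_mul_assoc, ← sq]
  rw [eigenprojection, eigenprojection, smul_mul_smul_comm, sq_add_smul_mul_sq_add_smul, hD, hD4]
  module

theorem isIdempotentElem_eigenprojection [NeZero (2 : K)] (hD : D ^ 3 = c ^ 2 • D) (hc : c ≠ 0) :
    IsIdempotentElem (eigenprojection c D) := by
  rw [IsIdempotentElem, eigenprojection_mul_eigenprojection hD, eigenprojection]
  match_scalars <;> field_simp <;> ring

theorem eigenprojection_mul_eigenprojection_neg (hD : D ^ 3 = c ^ 2 • D) :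
    eigenprojection c D * eigenprojection (-c) D = 0 := by
  rw [eigenprojection_mul_eigenprojection hD, mul_neg, ← sq]
  simp

theorem smul_eigenprojection_sub_eigenprojection_neg [NeZero (2 : K)] (hc : c ≠ 0) :
    c • (eigenprojection c D - eigenprojection (-c) D) = D := by
  rw [eigenprojection, eigenprojection, neg_sq, ← smul_sub, smul_smul]
  match_scalars <;> field_simp <;> ring

theorem IsSelfAdjoint.eigenprojection [StarRing K] [StarRing A] [StarModule K A]
    (hc : IsSelfAdjoint c) (hD : IsSelfAdjoint D) : IsSelfAdjoint (eigenprojection c D) :=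
  (((IsSelfAdjoint.ofNat 2).mul (hc.pow 2)).inv₀).smul ((hD.pow 2).add (hc.smul hD))

theorem Matrix.trace_eigenprojection {n : Type*} [Fintype n] [DecidableEq n] [NeZero (2 : K)]
    {D : Matrix n n K} (hc : c ≠ 0) (h1 : D.trace = 0) (h2 : (D ^ 2).trace = 2 * c ^ 2) :
    (eigenprojection c D).trace = 1 := by
  rw [eigenprojection, trace_smul, trace_add, trace_smul, h1, h2, smul_zero, add_zero,
    smul_eq_mul]
  field_simp

end Eigenprojection

open scoped ComplexOrder

theorem stmt_10_general (d : ℕ) (P Q : Matrix (Fin d) (Fin d) ℂ)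
    (hP : P.IsHermitian) (hP2 : P * P = P) (hPtr : P.trace = 1)
    (hQ : Q.IsHermitian) (hQ2 : Q * Q = Q) (hQtr : Q.trace = 1)
    (hPQ : (P * Q).trace < 1)
    (lam : ℝ) (hlam : lam = Real.sqrt (1 - ((P * Q).trace.re))) :
    ∃ Aplus Aminus : Matrix (Fin d) (Fin d) ℂ,
      Aplus.IsHermitian ∧ Aplus * Aplus = Aplus ∧ Aplus.trace = 1 ∧
      Aminus.IsHermitian ∧ Aminus * Aminus = Aminus ∧ Aminus.trace = 1 ∧
      Aplus * Aminus = 0 ∧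
      P - Q = (lam : ℂ) • (Aplus - Aminus) := by
  set t := (P * Q).trace
  have ht : ((t.re : ℝ) : ℂ) = t := Complex.ext rfl (Complex.lt_def.mp hPQ).2.symm
  have hpos : 0 < 1 - t.re := sub_pos.mpr (Complex.lt_def.mp hPQ).1
  have hc : (lam : ℂ) ≠ 0 := by
    rw [hlam, Complex.ofReal_ne_zero]; exact (Real.sqrt_pos.mpr hpos).ne'
  have hc2 : (lam : ℂ) ^ 2 = 1 - t := by
    rw [← Complex.ofReal_pow, hlam, Real.sq_sqrt hpos.le, Complex.ofReal_sub, ht,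
      Complex.ofReal_one]
  have hPQP : P * Q * P = t • P := by
    rw [Matrix.mul_mul_eq_trace_smul_of_isIdempotentElem hP2 hPtr, Matrix.trace_mul_comm]
  have hQPQ : Q * P * Q = t • Q := Matrix.mul_mul_eq_trace_smul_of_isIdempotentElem hQ2 hQtr P
  have hcube : (P - Q) ^ 3 = (lam : ℂ) ^ 2 • (P - Q) := by
    rw [hc2]; exact IsIdempotentElem.sub_pow_three hP2 hQ2 hPQP hQPQ
  have htr1 : (P - Q).trace = 0 := by rw [Matrix.trace_sub, hPtr, hQtr, sub_self]
  have htr2 : ((P - Q) ^ 2).trace = 2 * (lam : ℂ) ^ 2 := by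
    rw [IsIdempotentElem.sub_sq hP2 hQ2, Matrix.trace_sub, Matrix.trace_sub, Matrix.trace_add,
      Matrix.trace_mul_comm Q P, hPtr, hQtr, hc2]
    ring
  have hlam_sa : IsSelfAdjoint (lam : ℂ) := Complex.conj_ofReal lam
  have hD_sa : IsSelfAdjoint (P - Q) := hP.isSelfAdjoint.sub hQ.isSelfAdjoint
  refine ⟨eigenprojection (lam : ℂ) (P - Q), eigenprojection (-(lam : ℂ)) (P - Q),
    (hlam_sa.eigenprojection hD_sa).isHermitian,
    isIdempotentElem_eigenprojection hcube hc, Matrix.trace_eigenprojection hc htr1 htr2,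
    (hlam_sa.neg.eigenprojection hD_sa).isHermitian,
    isIdempotentElem_eigenprojection (by rwa [neg_sq]) (neg_ne_zero.mpr hc),
    Matrix.trace_eigenprojection (neg_ne_zero.mpr hc) htr1 (by rwa [neg_sq]),
    eigenprojection_mul_eigenprojection_neg hcube,
    (smul_eigenprojection_sub_eigenprojection_neg hc).symm⟩

theorem stmt_10 (d : ℕ) (hd : 2 ≤ d) (P Q : Matrix (Fin d) (Fin d) ℂ)
    (hP : P.IsHermitian) (hP2 : P * P = P) (hPtr : P.trace = 1)
    (hQ : Q.IsHermitian) (hQ2 : Q * Q = Q) (hQtr : Q.trace = 1)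
    (hPQ : (P * Q).trace < 1)
    (lam : ℝ) (hlam : lam = Real.sqrt (1 - ((P * Q).trace.re))) :
    ∃ Aplus Aminus : Matrix (Fin d) (Fin d) ℂ,
      Aplus.IsHermitian ∧ Aplus * Aplus = Aplus ∧ Aplus.trace = 1 ∧
      Aminus.IsHermitian ∧ Aminus * Aminus = Aminus ∧ Aminus.trace = 1 ∧
      Aplus * Aminus = 0 ∧
      P - Q = (lam : ℂ) • (Aplus - Aminus) :=
  stmt_10_general d P Q hP hP2 hPtr hQ hQ2 hQtr hPQ lam hlam
end
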